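/- For all real numbers b₁, b₂ and every real exponent γ > 3, there exists a constant c > 0 (depending only on γ) such that ||b₁ + b₂|^γ − |b₁|^γ − γ|b₁|^{γ−2} b₁ b₂ − (1/2)γ(γ−1)|b₁|^{γ−2} b₂²| ≤ c(|b₁|^{γ−3}|b₂|³ + |b₂|^γ). -/

import Mathlib

/-!
On the segment from `b₁` to `b₁ + b₂`, `f x = |x| ^ γ` has `f'' x = γ (γ - 1) |x| ^ (γ - 2)`, and
since `γ - 2 > 1` the mean value theorem bounds the oscillation of `f''` there by
`γ (γ - 1) (γ - 2) (|b₁| + |b₂|) ^ (γ - 3) |b₂|`. The second-order Taylor remainder is at most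
`b₂ ^ 2` times this oscillation, and
`(|b₁| + |b₂|) ^ (γ - 3) ≤ 2 ^ (γ - 3) (|b₁| ^ (γ - 3) + |b₂| ^ (γ - 3))`.
-/

open Real Set

theorem hasDerivAt_abs_rpow_mul_self {q : ℝ} (hq : 1 < q) (x : ℝ) :
    HasDerivAt (fun y : ℝ => |y| ^ q * y) ((q + 1) * |x| ^ q) x := by
  refine ((hasDerivAt_abs_rpow x hq).mul (hasDerivAt_id x)).congr_deriv ?_
  rcases eq_or_ne x 0 with rfl | hx
  · simp [zero_rpow (by linarith : q ≠ 0)]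
  · have hsq : |x| ^ (q - 2) * (x * x) = |x| ^ q := by
      rw [← abs_mul_abs_self x, ← mul_assoc, ← rpow_add_one (abs_ne_zero.2 hx),
        ← rpow_add_one (abs_ne_zero.2 hx)]
      ring_nf
    simp only [id]
    linear_combination q * hsq

theorem abs_abs_rpow_sub_two_mul_self_le (q x : ℝ) : |(|x| ^ (q - 2) * x)| ≤ |x| ^ (q - 1) := by
  rcases eq_or_ne x 0 with rfl | hx
  · simp [rpow_nonneg]
  · rw [abs_mul, abs_rpow_of_nonneg (abs_nonneg x), abs_abs, ← rpow_add_one (abs_ne_zero.2 hx)]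
    ring_nf; rfl

theorem abs_abs_rpow_sub_abs_rpow_le {q : ℝ} (hq : 1 < q) (x y : ℝ) :
    |(|y| ^ q - |x| ^ q)| ≤ q * max |x| |y| ^ (q - 1) * |y - x| := by
  refine Convex.norm_image_sub_le_of_norm_hasDerivWithin_le
    (fun z _ => (hasDerivAt_abs_rpow z hq).hasDerivWithinAt) (fun z hz => ?_) (convex_uIcc x y)
    left_mem_uIcc right_mem_uIcc
  have hz' : |z| ≤ max |x| |y| := by
    rcases le_total x y with h | h
    · rw [uIcc_of_le h] at hz; exact abs_le_max_abs_abs hz.1 hz.2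
    · rw [uIcc_of_ge h] at hz; rw [max_comm]; exact abs_le_max_abs_abs hz.1 hz.2
  rw [norm_eq_abs, mul_assoc, abs_mul, abs_of_pos (by linarith : 0 < q)]
  gcongr
  exact (abs_abs_rpow_sub_two_mul_self_le q z).trans (by gcongr)

theorem abs_abs_add_mul_rpow_sub_abs_rpow_le {q : ℝ} (hq : 1 < q) (a h : ℝ) {t : ℝ}
    (ht : t ∈ Icc (0 : ℝ) 1) : |(|a + t * h| ^ q - |a| ^ q)| ≤ q * (|a| + |h|) ^ (q - 1) * |h| := by
  have hth : |t * h| ≤ |h| := by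
    rw [abs_mul, abs_of_nonneg ht.1]; exact mul_le_of_le_one_left (abs_nonneg h) ht.2
  have hmax : max |a| |a + t * h| ≤ |a| + |h| :=
    max_le (le_add_of_nonneg_right (abs_nonneg h)) ((abs_add_le _ _).trans (by linarith))
  calc _ ≤ q * max |a| |a + t * h| ^ (q - 1) * |a + t * h - a| :=
        abs_abs_rpow_sub_abs_rpow_le hq _ _
    _ ≤ q * (|a| + |h|) ^ (q - 1) * |h| := by
        rw [add_sub_cancel_left]; gcongr

theorem rpow_add_le_two_rpow_mul_add_rpow {a b p : ℝ} (ha : 0 ≤ a) (hb : 0 ≤ b) (hp : 0 ≤ p) :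
    (a + b) ^ p ≤ 2 ^ p * (a ^ p + b ^ p) := calc
  (a + b) ^ p ≤ (2 * max a b) ^ p := by rw [two_mul]; gcongr <;> simp
  _ = 2 ^ p * max a b ^ p := mul_rpow zero_le_two (le_max_of_le_left ha)
  _ = 2 ^ p * max (a ^ p) (b ^ p) := by rw [rpow_max ha hb hp]
  _ ≤ 2 ^ p * (a ^ p + b ^ p) := by
    gcongr; exact max_le_add_of_nonneg (rpow_nonneg ha p) (rpow_nonneg hb p)

theorem abs_taylor_remainder_two_le {f f' f'' : ℝ → ℝ} (hf : ∀ x, HasDerivAt f (f' x) x)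
    (hf' : ∀ x, HasDerivAt f' (f'' x) x) {a h L : ℝ}
    (hL : ∀ t ∈ Icc (0 : ℝ) 1, |f'' (a + t * h) - f'' a| ≤ L) :
    |f (a + h) - f a - f' a * h - f'' a / 2 * h ^ 2| ≤ L * h ^ 2 := by
  have hline (t : ℝ) : HasDerivAt (fun s : ℝ => a + s * h) h t := by
    simpa using ((hasDerivAt_id t).mul_const h).const_add a
  set φ : ℝ → ℝ := fun t => f' (a + t * h) * h - f' a * h - f'' a * h ^ 2 * t
  have hφ (t : ℝ) : HasDerivAt φ ((f'' (a + t * h) - f'' a) * h ^ 2) t :=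
    ((((hf' _).comp t (hline t)).mul_const h).sub_const _ |>.sub
      ((hasDerivAt_id t).const_mul _)).congr_deriv (by ring)
  have hφ_bound : ∀ s ∈ Ico (0 : ℝ) 1, ‖(f'' (a + s * h) - f'' a) * h ^ 2‖ ≤ L * h ^ 2 := by
    intro s hs
    rw [norm_eq_abs, abs_mul, abs_of_nonneg (sq_nonneg h)]
    exact mul_le_mul_of_nonneg_right (hL s (Ico_subset_Icc_self hs)) (sq_nonneg h)
  have hφ_le : ∀ t ∈ Icc (0 : ℝ) 1, |φ t| ≤ L * h ^ 2 := by
    intro t ht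
    have hL0 : 0 ≤ L := (abs_nonneg _).trans (hL 0 (left_mem_Icc.2 zero_le_one))
    have := norm_image_sub_le_of_norm_deriv_le_segment' (fun s _ => (hφ s).hasDerivWithinAt)
      hφ_bound t ht
    simp only [φ, zero_mul, add_zero, sub_self, mul_zero, sub_zero, norm_eq_abs] at this
    exact this.trans (mul_le_of_le_one_right (by positivity) ht.2)
  set E : ℝ → ℝ := fun t => f (a + t * h) - f' a * h * t - f'' a * h ^ 2 * (t ^ 2 / 2)
  have hE (t : ℝ) : HasDerivAt E (φ t) t :=
    ((((hf _).comp t (hline t)).sub ((hasDerivAt_id t).const_mul _)).sub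
      (((hasDerivAt_pow 2 t).div_const 2).const_mul _)).congr_deriv (by simp only [φ]; ring)
  have := norm_image_sub_le_of_norm_deriv_le_segment_01' (fun t _ => (hE t).hasDerivWithinAt)
    (fun t ht => hφ_le t (Ico_subset_Icc_self ht))
  simp only [E, norm_eq_abs] at this
  convert this using 2
  ring_nf

theorem stmt_1 (γ : ℝ) (hγ : 3 < γ) :
    ∃ c : ℝ, 0 < c ∧ ∀ b₁ b₂ : ℝ,
      abs (|b₁ + b₂| ^ γ - |b₁| ^ γ - γ * |b₁| ^ (γ - 2) * b₁ * b₂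
        - (1 / 2) * γ * (γ - 1) * |b₁| ^ (γ - 2) * b₂ ^ 2)
        ≤ c * (|b₁| ^ (γ - 3) * |b₂| ^ (3 : ℝ) + |b₂| ^ γ) := by
  have hγ1 : 1 < γ := by linarith
  have hγ2 : 1 < γ - 2 := by linarith
  set K := γ * (γ - 1) * (γ - 2)
  have hK : 0 < K := mul_pos (mul_pos (by linarith) (by linarith)) (by linarith)
  refine ⟨K * 2 ^ (γ - 3), mul_pos hK (by positivity), fun b₁ b₂ => ?_⟩
  have hvar : ∀ t ∈ Icc (0 : ℝ) 1, |γ * (γ - 1) * |b₁ + t * b₂| ^ (γ - 2)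
      - γ * (γ - 1) * |b₁| ^ (γ - 2)| ≤ K * (|b₁| + |b₂|) ^ (γ - 3) * |b₂| := by
    intro t ht
    have := abs_abs_add_mul_rpow_sub_abs_rpow_le hγ2 b₁ b₂ ht
    rw [show γ - 2 - 1 = γ - 3 by ring] at this
    rw [← mul_sub, abs_mul, abs_of_pos (by nlinarith)]
    exact (mul_le_mul_of_nonneg_left this (by nlinarith)).trans_eq (by ring)
  have htaylor := abs_taylor_remainder_two_le (f := fun x => |x| ^ γ)
    (f' := fun x => γ * (|x| ^ (γ - 2) * x)) (f'' := fun x => γ * (γ - 1) * |x| ^ (γ - 2))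
    (fun x => (hasDerivAt_abs_rpow x hγ1).congr_deriv (mul_assoc _ _ _))
    (fun x => ((hasDerivAt_abs_rpow_mul_self hγ2 x).const_mul γ).congr_deriv (by ring)) hvar
  have hcube : |b₂| * b₂ ^ 2 = |b₂| ^ (3 : ℝ) := by
    rw [← sq_abs, show (3 : ℝ) = (3 : ℕ) by norm_num, rpow_natCast]; ring
  have hsplit : |b₂| ^ (γ - 3) * |b₂| ^ (3 : ℝ) = |b₂| ^ γ := by
    rw [← rpow_add' (abs_nonneg b₂) (by linarith)]; ring_nf
  calc _ = |(|b₁ + b₂| ^ γ - |b₁| ^ γ - γ * (|b₁| ^ (γ - 2) * b₁) * b₂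
          - γ * (γ - 1) * |b₁| ^ (γ - 2) / 2 * b₂ ^ 2)| := by ring_nf
    _ ≤ K * (|b₁| + |b₂|) ^ (γ - 3) * |b₂| * b₂ ^ 2 := htaylor
    _ ≤ K * (2 ^ (γ - 3) * (|b₁| ^ (γ - 3) + |b₂| ^ (γ - 3))) * (|b₂| * b₂ ^ 2) := by
        rw [mul_assoc _ |b₂|]
        gcongr
        exact rpow_add_le_two_rpow_mul_add_rpow (abs_nonneg b₁) (abs_nonneg b₂) (by linarith)
    _ = K * 2 ^ (γ - 3) * (|b₁| ^ (γ - 3) * |b₂| ^ (3 : ℝ) + |b₂| ^ γ) := by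
        rw [hcube, ← hsplit]; ring
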